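/- arXiv:0805.2778 — 2 statements merged into one kernel-verified Lean document; each statement's English description precedes it below -/
import Mathlib

section
/- Let κ be an infinite regular cardinal, i : C → D a fully faithful embedding such that every object of C is κ-small in D and all morphisms of D_κ are monomorphisms, and let u be a colimit in D of a κ-chain ū with values in the image of C. If u is C-homogeneous and C-universal, then ū has the extension property; in particular ū is a Fraïssé sequence in C. -/
/-!
Given `f : a ⟶ b` and `g : a ⟶ u_j`, homogeneity extends `i(g)` followed by the leg `u_j → u`
to some `χ : i(b) ⟶ u`. As `i(b)` is `κ`-small, `χ` factors through a stage `u_l`. At the common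
stage `m = max j l` the two candidate maps `a ⟶ u_m` agree after composing with the leg
`u_m → u`; this leg is a morphism of `D_κ` (constant chains put every `i(x)` in `D_κ`), hence
monic there, and faithfulness of `i` brings the equality back to `C`. The Fraïssé property is the
case `g = 𝟙`, and cofinality follows from universality and smallness in the same way.
-/

open CategoryTheory CategoryTheory.Limits Opposite

universe w v₁ u₁ v₂ u₂

namespace Fraisse

variable {C : Type u₁} [Category.{v₁} C] {D : Type u₂} [Category.{v₂} D]

/-- The amalgamation property. -/
def AP (C : Type u₁) [Category.{v₁} C] : Prop :=
  ∀ ⦃a b c : C⦄ (f : a ⟶ b) (g : a ⟶ c),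
    ∃ (d : C) (f' : b ⟶ d) (g' : c ⟶ d), f ≫ f' = g ≫ g'

/-- The joint embedding property. -/
def JEP (C : Type u₁) [Category.{v₁} C] : Prop :=
  ∀ a b : C, ∃ c : C, Nonempty (a ⟶ c) ∧ Nonempty (b ⟶ c)

/-- A category is `κ`-bounded if every chain of length `< κ` admits a cocone. -/
def IsBounded (κ : Cardinal.{w}) (C : Type u₁) [Category.{v₁} C] : Prop :=
  ∀ lam : Ordinal.{w}, lam < κ.ord → ∀ F : lam.ToType ⥤ C, Nonempty (Cocone F)

/-- The type of morphisms of a category, bundled with domain and codomain. -/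
def Mor (C : Type u₁) [Category.{v₁} C] : Type max u₁ v₁ := Σ (a : C) (b : C), a ⟶ b

/-- A dominating family of morphisms. -/
def Dominating (F : Set (Mor C)) : Prop :=
  (∀ x : C, ∃ s ∈ F, Nonempty (x ⟶ s.1)) ∧
  ∀ s ∈ F, ∀ (x : C) (f : s.1 ⟶ x), ∃ (y : C) (g : x ⟶ y),
    (⟨s.1, y, f ≫ g⟩ : Mor C) ∈ F

/-- `u` is `C`-homogeneous with respect to the embedding `i : C ⥤ D`. -/
def IsHomog (i : C ⥤ D) (u : D) : Prop :=
  ∀ ⦃a b : C⦄ (j : a ⟶ b) (χ : i.obj a ⟶ u), ∃ χ' : i.obj b ⟶ u, i.map j ≫ χ' = χ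

/-- `u` is `C`-universal with respect to the embedding `i : C ⥤ D`. -/
def IsUniv (i : C ⥤ D) (u : D) : Prop :=
  ∀ a : C, Nonempty (i.obj a ⟶ u)

/-- `u` is `C`-ultrahomogeneous with respect to the embedding `i : C ⥤ D`. -/
def IsUltrahomog (i : C ⥤ D) (u : D) : Prop :=
  ∀ ⦃a b : C⦄ (j : a ⟶ b) (χ₁ : i.obj a ⟶ u) (χ₂ : i.obj b ⟶ u),
    ∃ k : u ≅ u, χ₁ ≫ k.hom = i.map j ≫ χ₂

/-- An object `a` of `C` is `κ`-small in `D` if `Hom_D(i(a), -)` preserves colimits of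
`κ`-chains in `D`. -/
def KappaSmall (κ : Cardinal.{w}) (i : C ⥤ D) (a : C) : Prop :=
  PreservesColimitsOfShape κ.ord.ToType (coyoneda.obj (op (i.obj a)))

/-- Membership in `D_κ`: `d` is a colimit in `D` of a `κ`-chain with values in the image
of `C`. -/
def InDk (κ : Cardinal.{w}) (i : C ⥤ D) (d : D) : Prop :=
  ∃ (U : κ.ord.ToType ⥤ C) (c : Cocone (U ⋙ i)), Nonempty (IsColimit c) ∧ c.pt = d

/-- A limit point of a linear order: an element which is neither minimal nor a successor. -/
def IsLimitElem {α : Type w} [LinearOrder α] (j : α) : Prop :=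
  (∃ m, m < j) ∧ ∀ m, m < j → ∃ m', m < m' ∧ m' < j

/-- The inclusion functor of the initial segment below `j`. -/
def segIncl {α : Type w} [LinearOrder α] (j : α) : {m : α // m < j} ⥤ α :=
  Monotone.functor (f := fun m => (m : α)) fun _ _ h => h

/-- The cocone over the restriction of a chain `U` to the initial segment below `j`,
with point `U.obj j` and legs `U.map (u_m ⟶ u_j)`. -/
def restrCocone {α : Type w} [LinearOrder α] (U : α ⥤ C) (j : α) :
    Cocone (segIncl j ⋙ U) where
  pt := U.obj j
  ι :=
    { app := fun m => U.map (homOfLE m.2.le)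
      naturality := fun m m' g => by
        dsimp [segIncl]
        rw [Category.comp_id, ← U.map_comp]
        congr 1 }

/-- A chain is continuous if at every limit point `j` the object `U.obj j`, together with
the canonical morphisms, is a colimit of the restriction of `U` below `j`. -/
def ContinuousChain {α : Type w} [LinearOrder α] (U : α ⥤ C) : Prop :=
  ∀ j : α, IsLimitElem j → Nonempty (IsColimit (restrCocone U j))

/-- Membership in `D_κ^c`: `d` is a colimit in `D` of a continuous `κ`-chain with values
in the image of `C`. -/
def InDkc (κ : Cardinal.{w}) (i : C ⥤ D) (d : D) : Prop :=
  ∃ (U : κ.ord.ToType ⥤ C), ContinuousChain U ∧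
    ∃ c : Cocone (U ⋙ i), Nonempty (IsColimit c) ∧ c.pt = d

/-- All morphisms of the full subcategory of `D` on `P` are monomorphisms (as arrows of
that full subcategory). -/
def AllMonoOn (P : D → Prop) : Prop :=
  ∀ ⦃a b : D⦄, P a → P b → ∀ (f : a ⟶ b), ∀ ⦃x : D⦄, P x →
    ∀ (g h : x ⟶ a), g ≫ f = h ≫ f → g = h

/-- A Fraïssé sequence. -/
def IsFraisseSeq {α : Type w} [LinearOrder α] (U : α ⥤ C) : Prop :=
  (∀ a : C, ∃ j : α, Nonempty (a ⟶ U.obj j)) ∧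
  ∀ (j : α) (x : C) (f : U.obj j ⟶ x),
    ∃ (l : α) (h : j ≤ l) (g : x ⟶ U.obj l), U.map (homOfLE h) = f ≫ g

/-- The extension property for a chain. -/
def HasExtProp {α : Type w} [LinearOrder α] (U : α ⥤ C) : Prop :=
  ∀ ⦃a b : C⦄ (f : a ⟶ b) (j : α) (g : a ⟶ U.obj j),
    ∃ (l : α) (h : j ≤ l) (k : b ⟶ U.obj l), g ≫ U.map (homOfLE h) = f ≫ k

lemma inDk_obj (κ : Cardinal.{w}) [Nonempty κ.ord.ToType] (i : C ⥤ D) (a : C) :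
    InDk κ i (i.obj a) :=
  ⟨(Functor.const _).obj a, (Cocone.precompose (Functor.constComp _ a i).hom).obj
    (constCocone _ (i.obj a)),
    ⟨(IsColimit.precomposeHomEquiv _ _).symm (isColimitConstCocone _ _)⟩, rfl⟩

lemma exists_map_comp_ι_eq {J : Type*} [Category J] (i : C ⥤ D) [i.Full] {F : J ⥤ C}
    {c : Cocone (F ⋙ i)} (hc : IsColimit c) (a : C)
    [PreservesColimitsOfShape J (coyoneda.obj (op (i.obj a)))] (χ : i.obj a ⟶ c.pt) :
    ∃ (j : J) (k : a ⟶ F.obj j), i.map k ≫ c.ι.app j = χ := by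
  obtain ⟨j, ψ, hψ⟩ :=
    Types.jointly_surjective _ (isColimitOfPreserves (coyoneda.obj (op (i.obj a))) hc) χ
  obtain ⟨k, rfl⟩ := i.map_surjective ψ
  exact ⟨j, k, hψ⟩

lemma hasExtProp_of_isHomog {α : Type w} [LinearOrder α] (i : C ⥤ D) {U : α ⥤ C}
    (c : Cocone (U ⋙ i))
    (hfac : ∀ (a : C) (χ : i.obj a ⟶ c.pt),
      ∃ (l : α) (k : a ⟶ U.obj l), i.map k ≫ c.ι.app l = χ)
    (hcancel : ∀ (a : C) (m : α) (g h : a ⟶ U.obj m),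
      i.map g ≫ c.ι.app m = i.map h ≫ c.ι.app m → g = h)
    (hhomog : IsHomog i c.pt) : HasExtProp U := by
  intro a b f j g
  obtain ⟨χ, hχ⟩ := hhomog f (i.map g ≫ c.ι.app j)
  obtain ⟨l, k, rfl⟩ := hfac b χ
  refine ⟨max j l, le_max_left j l, k ≫ U.map (homOfLE (le_max_right j l)), hcancel _ _ _ _ ?_⟩
  have hw := c.w (homOfLE (le_max_right j l))
  have hw' := c.w (homOfLE (le_max_left j l))
  simp only [Functor.comp_map] at hw hw'
  simp only [Functor.map_comp, Category.assoc, hw, hw', hχ]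

lemma HasExtProp.isFraisseSeq {α : Type w} [LinearOrder α] {U : α ⥤ C} (hU : HasExtProp U)
    (hcof : ∀ a : C, ∃ j : α, Nonempty (a ⟶ U.obj j)) : IsFraisseSeq U := by
  refine ⟨hcof, fun j x f => ?_⟩
  obtain ⟨l, h, k, hk⟩ := hU f j (𝟙 (U.obj j))
  exact ⟨l, h, k, by simpa using hk⟩

theorem statement_3_general {C : Type u₁} [Category.{v₁} C] {D : Type u₂} [Category.{v₂} D]
    (κ : Cardinal.{w})
    (i : C ⥤ D) (hfull : i.Full) (hfaith : i.Faithful)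
    (hsmall : ∀ a : C, KappaSmall κ i a)
    (hmono : AllMonoOn (InDk κ i))
    (U : κ.ord.ToType ⥤ C) (c : Cocone (U ⋙ i)) (hc : IsColimit c)
    (hhomog : IsHomog i c.pt) (huniv : IsUniv i c.pt) :
    HasExtProp U ∧ IsFraisseSeq U := by
  have hfac (a : C) (χ : i.obj a ⟶ c.pt) :
      ∃ (l : κ.ord.ToType) (k : a ⟶ U.obj l), i.map k ≫ c.ι.app l = χ :=
    have : PreservesColimitsOfShape _ _ := hsmall a
    exists_map_comp_ι_eq i hc a χ
  have hcancel (a : C) (m : κ.ord.ToType) (g h : a ⟶ U.obj m)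
      (hgh : i.map g ≫ c.ι.app m = i.map h ≫ c.ι.app m) : g = h :=
    have : Nonempty κ.ord.ToType := ⟨m⟩
    i.map_injective <|
      hmono (inDk_obj κ i _) ⟨U, c, ⟨hc⟩, rfl⟩ (c.ι.app m) (inDk_obj κ i a) _ _ hgh
  have hext := hasExtProp_of_isHomog i c hfac hcancel hhomog
  refine ⟨hext, hext.isFraisseSeq fun a => ?_⟩
  obtain ⟨l, k, -⟩ := hfac a (huniv a).some
  exact ⟨l, ⟨k⟩⟩

/-- Let `κ` be an infinite regular cardinal, `i : C ⥤ D` a fully faithful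
embedding such that every object of `C` is `κ`-small in `D` and all morphisms of `D_κ` are
monomorphisms, and let `u` be a colimit in `D` of a `κ`-chain `U` with values in the image
of `C`.  If `u` is `C`-homogeneous and `C`-universal then `U` has the extension property;
in particular `U` is a Fraïssé sequence in `C`. -/
theorem statement_3 {C : Type u₁} [Category.{v₁} C] {D : Type u₂} [Category.{v₂} D]
    (κ : Cardinal.{w}) (hκ : κ.IsRegular)
    (i : C ⥤ D) (hfull : i.Full) (hfaith : i.Faithful)
    (hsmall : ∀ a : C, KappaSmall κ i a)
    (hmono : AllMonoOn (InDk κ i))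
    (U : κ.ord.ToType ⥤ C) (c : Cocone (U ⋙ i)) (hc : IsColimit c)
    (hhomog : IsHomog i c.pt) (huniv : IsUniv i c.pt) :
    HasExtProp U ∧ IsFraisseSeq U :=
  statement_3_general κ i hfull hfaith hsmall hmono U c hc hhomog huniv

end Fraisse
end

section
/- Let κ be an infinite regular cardinal, C a category satisfying the amalgamation property, and i : C → D a fully faithful embedding such that every object of C is κ-small in D. If ū is a κ-Fraïssé sequence in C and u is a colimit in D of (the image under i of) ū, then u is C-homogeneous and C-universal. -/
open CategoryTheory CategoryTheory.Limits Opposite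

universe w v₁ u₁ v₂ u₂

namespace Fraisse

variable {C : Type u₁} [Category.{v₁} C] {D : Type u₂} [Category.{v₂} D]

/-!
Since `i(a)` is small, a morphism `χ : i(a) ⟶ u` factors through some leg `i(u_m) ⟶ u`, and by
fullness the factor is `i(f)` for some `f : a ⟶ u_m`. Amalgamating `f` with `j : a ⟶ b` and
absorbing the amalgam back into the Fraïssé sequence gives `b ⟶ u_l` compatible with `f`, whose
composite with the leg at `l` extends `χ`. Universality is immediate from cofinality.
-/
lemma IsFraisseSeq.hasExtProp {α : Type w} [LinearOrder α] {U : α ⥤ C} (hAP : AP C)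
    (hU : IsFraisseSeq U) : HasExtProp U := by
  intro a b f j g
  obtain ⟨d, f', g', hcomm⟩ := hAP f g
  obtain ⟨l, hjl, k, hk⟩ := hU.2 j d g'
  exact ⟨l, hjl, f' ≫ k, by rw [hk, ← Category.assoc, ← hcomm, Category.assoc]⟩

lemma isUniv_of_forall_nonempty_hom {J : Type*} [Category J] {U : J ⥤ C}
    (hU : ∀ a : C, ∃ j : J, Nonempty (a ⟶ U.obj j)) (i : C ⥤ D) (c : Cocone (U ⋙ i)) :
    IsUniv i c.pt := fun a =>
  let ⟨j, ⟨g⟩⟩ := hU a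
  ⟨i.map g ≫ c.ι.app j⟩

lemma isHomog_of_hasExtProp {α : Type w} [LinearOrder α] {U : α ⥤ C} (hU : HasExtProp U)
    (i : C ⥤ D) [i.Full] {c : Cocone (U ⋙ i)} (hc : IsColimit c)
    (hsmall : ∀ a : C, PreservesColimit (U ⋙ i) (coyoneda.obj (op (i.obj a)))) :
    IsHomog i c.pt := by
  intro a b j χ
  obtain ⟨m, p, rfl⟩ := exists_hom_of_preservesColimit_coyoneda hc χ
  obtain ⟨l, hml, k, hk⟩ := hU j m (i.preimage p)
  refine ⟨i.map k ≫ c.ι.app l, ?_⟩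
  calc i.map j ≫ i.map k ≫ c.ι.app l
      = i.map (i.preimage p ≫ U.map (homOfLE hml)) ≫ c.ι.app l := by
        rw [hk, i.map_comp, Category.assoc]
    _ = p ≫ c.ι.app m := by
        rw [i.map_comp, i.map_preimage, Category.assoc]
        exact congrArg (p ≫ ·) (c.w (homOfLE hml))

theorem statement_4_general {C : Type u₁} [Category.{v₁} C] {D : Type u₂} [Category.{v₂} D]
    (κ : Cardinal.{w}) (hAP : AP C)
    (i : C ⥤ D) (hfull : i.Full)
    (hsmall : ∀ a : C, KappaSmall κ i a)
    (U : κ.ord.ToType ⥤ C) (hU : IsFraisseSeq U)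
    (c : Cocone (U ⋙ i)) (hc : IsColimit c) :
    IsHomog i c.pt ∧ IsUniv i c.pt := by
  have hpres (a : C) : PreservesColimit (U ⋙ i) (coyoneda.obj (op (i.obj a))) :=
    have : PreservesColimitsOfShape κ.ord.ToType (coyoneda.obj (op (i.obj a))) := hsmall a
    inferInstance
  exact ⟨isHomog_of_hasExtProp (hU.hasExtProp hAP) i hc hpres,
    isUniv_of_forall_nonempty_hom hU.1 i c⟩

/-- Let `κ` be an infinite regular cardinal, `C` a category satisfying
the amalgamation property, and `i : C ⥤ D` a fully faithful embedding such that every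
object of `C` is `κ`-small in `D`.  If `U` is a `κ`-Fraïssé sequence in `C` and `u` is a
colimit in `D` of the image of `U` under `i`, then `u` is `C`-homogeneous and
`C`-universal. -/
theorem statement_4 {C : Type u₁} [Category.{v₁} C] {D : Type u₂} [Category.{v₂} D]
    (κ : Cardinal.{w}) (hκ : κ.IsRegular) (hAP : AP C)
    (i : C ⥤ D) (hfull : i.Full) (hfaith : i.Faithful)
    (hsmall : ∀ a : C, KappaSmall κ i a)
    (U : κ.ord.ToType ⥤ C) (hU : IsFraisseSeq U)
    (c : Cocone (U ⋙ i)) (hc : IsColimit c) :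
    IsHomog i c.pt ∧ IsUniv i c.pt :=
  statement_4_general κ hAP i hfull hsmall U hU c hc

end Fraisse
end
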